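/- Equip the range Im R with the inner product ⟨f,g⟩_{Im R} := ⟨R♯f, R♯g⟩_{L²}, where R♯ denotes the Moore–Penrose inverse (minimal-norm solution map). Then for every θ̃ ∈ P, every f ∈ Im R and every v ∈ ℝⁿ, the reproducing property ⟨v, f(θ̃)⟩_{ℝⁿ} = ⟨Q(·,θ̃)v, f⟩_{Im R} holds, where Q(θ,θ̃) = ∫₀ᵀ e^{A(θ)(T−s)} B(θ) B(θ̃)ᵀ e^{A(θ̃)ᵀ(T−s)} ds. Hence Im R is a reproducing kernel Hilbert space with kernel Q. -/

import Mathlib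

open MeasureTheory Matrix Set NormedSpace Filter
open scoped RealInnerProductSpace
noncomputable section

/-- Lebesgue measure restricted to `[0,T]`. -/
def muT (T : ℝ) : Measure ℝ := MeasureTheory.volume.restrict (Set.Icc (0:ℝ) T)

/-- The space `L²([0,T], ℝᵐ)`. -/
abbrev L2 (m : ℕ) (T : ℝ) := MeasureTheory.Lp (EuclideanSpace ℝ (Fin m)) 2 (muT T)

/-- Single-parameter reachability map `u ↦ ∫₀ᵀ e^{A(T-s)} B u(s) ds`. -/
def RopK {n m : ℕ} (T : ℝ) (A : Matrix (Fin n) (Fin n) ℝ) (B : Matrix (Fin n) (Fin m) ℝ)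
    (u : L2 m T) : EuclideanSpace ℝ (Fin n) :=
  ∫ s in Set.Icc (0:ℝ) T, WithLp.toLp 2 (((NormedSpace.exp ((T - s) • A)) * B).mulVec (u s))

/-- The adjoint kernel `s ↦ Bᵀ e^{Aᵀ(T-s)} v`. -/
def RadjK {n m : ℕ} (T : ℝ) (A : Matrix (Fin n) (Fin n) ℝ) (B : Matrix (Fin n) (Fin m) ℝ)
    (v : EuclideanSpace ℝ (Fin n)) (s : ℝ) : EuclideanSpace ℝ (Fin m) :=
  WithLp.toLp 2 ((Bᵀ * NormedSpace.exp ((T - s) • Aᵀ)).mulVec v)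

/-- Parametrized reachability operator `(Ru)(θ)`. -/
def RopFam {n m : ℕ} (T : ℝ) (A : ℝ → Matrix (Fin n) (Fin n) ℝ)
    (B : ℝ → Matrix (Fin n) (Fin m) ℝ) (u : L2 m T) (θ : ℝ) : EuclideanSpace ℝ (Fin n) :=
  RopK T (A θ) (B θ) u

/-- The reproducing kernel `Q(θ, θ')`. -/
def Qfun {n m : ℕ} (T : ℝ) (A : ℝ → Matrix (Fin n) (Fin n) ℝ)
    (B : ℝ → Matrix (Fin n) (Fin m) ℝ) (θ θ' : ℝ) : Matrix (Fin n) (Fin n) ℝ :=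
  Matrix.of fun i j => ∫ s in Set.Icc (0:ℝ) T,
    (NormedSpace.exp ((T - s) • A θ) * B θ * (B θ')ᵀ * NormedSpace.exp ((T - s) • (A θ')ᵀ)) i j

/-- Controllability Gramian of `(A,B)` on `[0,T]`. -/
def Gram {n m : ℕ} (T : ℝ) (A : Matrix (Fin n) (Fin n) ℝ) (B : Matrix (Fin n) (Fin m) ℝ) :
    Matrix (Fin n) (Fin n) ℝ :=
  Matrix.of fun i j => ∫ s in Set.Icc (0:ℝ) T,
    ((NormedSpace.exp ((T - s) • A)) * B * Bᵀ * (NormedSpace.exp ((T - s) • Aᵀ))) i j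

/-!
Pairing `v` with `(R u)(θ̃)` is the `L²` pairing of `u` with the adjoint kernel
`k(s) = B(θ̃)ᵀ e^{A(θ̃)ᵀ(T-s)} v`, and `R k = Q(·,θ̃) v`. Hence `R♯(Q(·,θ̃) v) - k ∈ ker R`,
while the minimal-norm solution `R♯ f` is orthogonal to `ker R`, so
`⟨R♯(Q(·,θ̃) v), R♯ f⟩ = ⟨k, R♯ f⟩ = ⟨v, f(θ̃)⟩`.
-/

theorem mem_orthogonal_ker_of_forall_norm_le {E F : Type*} [NormedAddCommGroup E]
    [InnerProductSpace ℝ E] [AddCommGroup F] [Module ℝ F] (L : E →ₗ[ℝ] F) {x : E}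
    (hx : ∀ w, L w = L x → ‖x‖ ≤ ‖w‖) : x ∈ (LinearMap.ker L)ᗮ := by
  have hinf : ‖x - 0‖ = ⨅ k : LinearMap.ker L, ‖x - k‖ := by
    refine le_antisymm (le_ciInf fun k => by simpa using hx (x - k) (by simp)) ?_
    exact ciInf_le ⟨0, by rintro _ ⟨k, rfl⟩; exact norm_nonneg _⟩ (0 : LinearMap.ker L)
  rw [Submodule.mem_orthogonal']
  simpa using ((LinearMap.ker L).norm_eq_iInf_iff_real_inner_eq_zero (zero_mem _)).1 hinf

theorem inner_eq_of_map_eq_of_forall_norm_le {E F : Type*} [NormedAddCommGroup E]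
    [InnerProductSpace ℝ E] [AddCommGroup F] [Module ℝ F] (L : E →ₗ[ℝ] F) {x y z : E}
    (hx : ∀ w, L w = L x → ‖x‖ ≤ ‖w‖) (hyz : L y = L z) : ⟪y, x⟫ = ⟪z, x⟫ := by
  rw [← sub_eq_zero, ← inner_sub_left]
  exact Submodule.inner_right_of_mem_orthogonal (by simp [hyz])
    (mem_orthogonal_ker_of_forall_norm_le L hx)

theorem Matrix.inner_toLp_transpose_mulVec {ι κ : Type*} [Fintype ι] [Fintype κ]
    (M : Matrix ι κ ℝ) (v : EuclideanSpace ℝ ι) (x : EuclideanSpace ℝ κ) :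
    ⟪WithLp.toLp 2 (Mᵀ *ᵥ v), x⟫ = ⟪v, WithLp.toLp 2 (M *ᵥ x)⟫ := by
  simp [EuclideanSpace.inner_eq_star_dotProduct, mulVec_transpose, dotProduct_mulVec,
    dotProduct_comm]

theorem Matrix.continuous_exp_smul {ι : Type*} [Fintype ι] [DecidableEq ι] (A : Matrix ι ι ℝ) :
    Continuous fun t : ℝ => exp (t • A) := by
  -- Matrices carry no global norm; any submultiplicative one makes `exp` continuous.
  let : NormedRing (Matrix ι ι ℝ) := Matrix.linftyOpNormedRing
  let : NormedAlgebra ℝ (Matrix ι ι ℝ) := Matrix.linftyOpNormedAlgebra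
  let : NormedAlgebra ℚ (Matrix ι ι ℝ) := .restrictScalars ℚ ℝ _
  exact exp_continuous.comp (continuous_id.smul continuous_const)

theorem Matrix.integral_toLp_mulVec {α ι κ : Type*} [MeasurableSpace α] [Fintype ι] [Fintype κ]
    {μ : Measure α} {N : α → Matrix ι κ ℝ} (hN : ∀ i j, Integrable (fun s => N s i j) μ)
    (v : κ → ℝ) :
    ∫ s, WithLp.toLp 2 (N s *ᵥ v) ∂μ = WithLp.toLp 2 ((of fun i j => ∫ s, N s i j ∂μ) *ᵥ v) := by
  have hcoord : ∀ i, Integrable (fun s => N s i ⬝ᵥ v) μ := fun i =>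
    integrable_finsetSum _ fun j _ => (hN i j).mul_const (v j)
  ext i
  rw [eval_integral_piLp hcoord]
  simp only [mulVec, dotProduct, of_apply]
  rw [integral_finsetSum _ fun j _ => (hN i j).mul_const (v j)]
  simp only [integral_mul_const]

instance isFiniteMeasure_muT (T : ℝ) : IsFiniteMeasure (muT T) := by
  unfold muT; infer_instance

section Reachability

variable {n m : ℕ} (T : ℝ) (A : Matrix (Fin n) (Fin n) ℝ) (B : Matrix (Fin n) (Fin m) ℝ)

theorem continuous_exp_sub_smul_mul :
    Continuous fun s : ℝ => exp ((T - s) • A) * B :=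
  ((continuous_exp_smul A).comp (continuous_const.sub continuous_id)).matrix_mul continuous_const

theorem RadjK_eq_transpose_mulVec (v : EuclideanSpace ℝ (Fin n)) (s : ℝ) :
    RadjK T A B v s = WithLp.toLp 2 ((exp ((T - s) • A) * B)ᵀ *ᵥ v) := by
  rw [RadjK, transpose_mul, ← exp_transpose, transpose_smul]

theorem inner_RadjK (v : EuclideanSpace ℝ (Fin n)) (s : ℝ) (x : EuclideanSpace ℝ (Fin m)) :
    ⟪RadjK T A B v s, x⟫ = ⟪v, WithLp.toLp 2 ((exp ((T - s) • A) * B) *ᵥ x)⟫ := by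
  rw [RadjK_eq_transpose_mulVec, inner_toLp_transpose_mulVec]

theorem memLp_RadjK (v : EuclideanSpace ℝ (Fin n)) : MemLp (RadjK T A B v) 2 (muT T) := by
  have hc : Continuous (RadjK T A B v) := by
    simp_rw [funext (RadjK_eq_transpose_mulVec T A B v)]
    exact (PiLp.continuous_toLp 2 _).comp
      ((continuous_exp_sub_smul_mul T A B).matrix_transpose.matrix_mulVec continuous_const)
  obtain ⟨C, hC⟩ := isCompact_Icc.exists_bound_of_continuousOn (hc.continuousOn (s := Icc 0 T))
  exact MemLp.of_bound hc.aestronglyMeasurable C (ae_restrict_of_forall_mem measurableSet_Icc hC)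

def RadjLp (v : EuclideanSpace ℝ (Fin n)) : L2 m T := (memLp_RadjK T A B v).toLp

theorem coeFn_RadjLp (v : EuclideanSpace ℝ (Fin n)) : RadjLp T A B v =ᵐ[muT T] RadjK T A B v :=
  (memLp_RadjK T A B v).coeFn_toLp

theorem integrable_exp_mul_mulVec (u : L2 m T) :
    Integrable (fun s => WithLp.toLp 2 ((exp ((T - s) • A) * B) *ᵥ u s)) (muT T) := by
  classical
  -- The `i`-th coordinate is the `L²` pairing of `u` with the adjoint kernel of `eᵢ`.
  refine integrable_piLp_iff.2 fun i =>
    (L2.integrable_inner (RadjLp T A B (EuclideanSpace.single i 1)) u).congr ?_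
  filter_upwards [coeFn_RadjLp T A B (EuclideanSpace.single i 1)] with s hs
  simp [hs, inner_RadjK, EuclideanSpace.inner_single_left]

theorem inner_RopK (v : EuclideanSpace ℝ (Fin n)) (u : L2 m T) :
    ⟪v, RopK T A B u⟫ = ⟪RadjLp T A B v, u⟫ := by
  rw [RopK, ← muT, ← integral_inner (integrable_exp_mul_mulVec T A B u), L2.inner_def]
  refine integral_congr_ae ?_
  filter_upwards [coeFn_RadjLp T A B v] with s hs
  rw [hs, inner_RadjK]

def RopKₗ : L2 m T →ₗ[ℝ] EuclideanSpace ℝ (Fin n) where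
  toFun := RopK T A B
  map_add' u w := ext_inner_left ℝ fun v => by simp only [inner_RopK, inner_add_right]
  map_smul' c u := ext_inner_left ℝ fun v => by
    simp only [inner_RopK, inner_smul_right, RingHom.id_apply]

end Reachability

theorem RopFam_RadjLp {n m : ℕ} (T : ℝ) (A : ℝ → Matrix (Fin n) (Fin n) ℝ)
    (B : ℝ → Matrix (Fin n) (Fin m) ℝ) (θ θ' : ℝ) (v : EuclideanSpace ℝ (Fin n)) :
    RopFam T A B (RadjLp T (A θ') (B θ') v) θ = WithLp.toLp 2 (Qfun T A B θ θ' *ᵥ v) := by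
  let N : ℝ → Matrix (Fin n) (Fin n) ℝ :=
    fun s => exp ((T - s) • A θ) * B θ * (B θ')ᵀ * exp ((T - s) • (A θ')ᵀ)
  have hN : Continuous N :=
    ((continuous_exp_sub_smul_mul T (A θ) (B θ)).matrix_mul continuous_const).matrix_mul
      ((continuous_exp_smul _).comp (continuous_const.sub continuous_id))
  have hkernel : (fun s => WithLp.toLp 2 ((exp ((T - s) • A θ) * B θ) *ᵥ
      RadjLp T (A θ') (B θ') v s)) =ᵐ[muT T] fun s => WithLp.toLp 2 (N s *ᵥ v) := by
    filter_upwards [coeFn_RadjLp T (A θ') (B θ') v] with s hs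
    rw [hs, RadjK, mulVec_mulVec, ← Matrix.mul_assoc]
  rw [RopFam, RopK, ← muT, integral_congr_ae hkernel]
  exact integral_toLp_mulVec (fun i j => (hN.matrix_elem i j).integrableOn_Icc) v

theorem reproducing_property_general {n m : ℕ} (T θm θp : ℝ)
    (A : ℝ → Matrix (Fin n) (Fin n) ℝ) (B : ℝ → Matrix (Fin n) (Fin m) ℝ)
    (uf : L2 m T)
    (hufmin : ∀ w : L2 m T,
      (∀ θ ∈ Set.Icc θm θp, RopFam T A B w θ = RopFam T A B uf θ) → ‖uf‖ ≤ ‖w‖)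
    (θt : ℝ) (v : EuclideanSpace ℝ (Fin n))
    (uQ : L2 m T)
    (huQ : ∀ θ ∈ Set.Icc θm θp, RopFam T A B uQ θ = (Qfun T A B θ θt).mulVec v) :
    ⟪v, RopFam T A B uf θt⟫ = ⟪uQ, uf⟫ := by
  let R : L2 m T →ₗ[ℝ] (Icc θm θp → EuclideanSpace ℝ (Fin n)) :=
    LinearMap.pi fun θ => RopKₗ T (A θ) (B θ)
  have hmin : ∀ w, R w = R uf → ‖uf‖ ≤ ‖w‖ := fun w hw =>
    hufmin w fun θ hθ => congr_fun hw ⟨θ, hθ⟩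
  have hQ : R uQ = R (RadjLp T (A θt) (B θt) v) := funext fun θ =>
    WithLp.ofLp_injective 2 <|
      (huQ θ θ.2).trans (congrArg WithLp.ofLp (RopFam_RadjLp T A B θ θt v).symm)
  calc ⟪v, RopFam T A B uf θt⟫ = ⟪RadjLp T (A θt) (B θt) v, uf⟫ := inner_RopK _ _ _ v uf
    _ = ⟪uQ, uf⟫ := (inner_eq_of_map_eq_of_forall_norm_le R hmin hQ).symm

/-- reproducing property of the kernel `Q` for the inner product
`⟨f,g⟩_{Im R} = ⟨R♯f, R♯g⟩_{L²}` on the range of `R`.  Here `f = R uf` with `uf = R♯f` the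
minimal-norm solution, and `uQ = R♯(Q(·,θ̃)v)` the minimal-norm solution for the kernel
section.  Then `⟨v, f(θ̃)⟩_{ℝⁿ} = ⟨Q(·,θ̃)v, f⟩_{Im R} = ⟨uQ, uf⟩_{L²}`. -/
theorem reproducing_property {n m : ℕ} (T θm θp : ℝ) (hT : 0 < T) (hθ : θm ≤ θp)
    (A : ℝ → Matrix (Fin n) (Fin n) ℝ) (B : ℝ → Matrix (Fin n) (Fin m) ℝ)
    (hA : ∀ i j, Continuous fun θ => A θ i j) (hB : ∀ i j, Continuous fun θ => B θ i j)
    (uf : L2 m T)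
    (hufmin : ∀ w : L2 m T,
      (∀ θ ∈ Set.Icc θm θp, RopFam T A B w θ = RopFam T A B uf θ) → ‖uf‖ ≤ ‖w‖)
    (θt : ℝ) (hθt : θt ∈ Set.Icc θm θp) (v : EuclideanSpace ℝ (Fin n))
    (uQ : L2 m T)
    (huQ : ∀ θ ∈ Set.Icc θm θp, RopFam T A B uQ θ = (Qfun T A B θ θt).mulVec v)
    (huQmin : ∀ w : L2 m T,
      (∀ θ ∈ Set.Icc θm θp, RopFam T A B w θ = (Qfun T A B θ θt).mulVec v) → ‖uQ‖ ≤ ‖w‖) :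
    ⟪v, RopFam T A B uf θt⟫ = ⟪uQ, uf⟫ :=
  reproducing_property_general T θm θp A B uf hufmin θt v uQ huQ
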